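/- arXiv:2508.06907 — 2 statements merged into one kernel-verified Lean document; each statement's English description precedes it below -/
import Mathlib

section
/- Let P₂ be a permutation constructed by Construction 2 (pattern u₁v₁w₁v₂u₂v₃w₂… of length 4m-1, where all symbols of U are above those of V, which are above those of W, and V is square-free). Let z and t be integers with z < b < t for every symbol b of P₂. Then the permutation z P₂ t is square-free. -/
/-!
Sort the entries of `z P₂ t` into levels: `z` (level 0) < letters of `W` (1) < letters of `V` (2)
< letters of `U` (3) < `t` (4), so a higher level at a position forces a larger entry. The two
halves of a square must therefore never compare levels in opposite directions. Along
`0 (3 2 1 2)^(m-1) 3 2 1 4` the level rises from position `j` to `j + 1` exactly when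
`j ≡ 0, 3 (mod 4)`, so comparing the first two steps of both halves forces the half-length to be
a multiple of 4, and the extreme letters `z` and `t` keep the square away from both ends. Such a
square, read at its even positions, is a square in `V`.
-/

/-- Two sequences of distinct integers are order-isomorphic:
same length and corresponding pairs compare the same way. -/
def OrdIso (p q : List ℤ) : Prop :=
  p.length = q.length ∧
  ∀ i j : ℕ, i < p.length → j < p.length →
    (p.getD i 0 < p.getD j 0 ↔ q.getD i 0 < q.getD j 0)

/-- A square is a sequence X₁X₂ with X₁ order-isomorphic to X₂ and |X₁| ≥ 2. -/
def IsSquareL (x : List ℤ) : Prop :=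
  ∃ a b : List ℤ, x = a ++ b ∧ 2 ≤ a.length ∧ OrdIso a b

/-- A sequence contains a square if some contiguous factor is a square. -/
def ContainsSquare (p : List ℤ) : Prop :=
  ∃ f : List ℤ, f <:+: p ∧ IsSquareL f

/-- Square-free: no contiguous factor is a square. -/
def SquareFreeL (p : List ℤ) : Prop := ¬ ContainsSquare p

/-- `Q` is an extension of `P` in position `i`:
`Q` has length `|P|+1` and deleting its (i+1)-th symbol gives a
sequence order-isomorphic to `P`. -/
def ExtL (Q P : List ℤ) (i : ℕ) : Prop :=
  Q.Nodup ∧ Q.length = P.length + 1 ∧ i ≤ P.length ∧ OrdIso (Q.eraseIdx i) P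

/-- The interleaving pattern a₁b₁c₁b₂a₂b₃c₂… of length 4m-1 :
with 1-based index i, pᵢ = a_{(i+3)/4} if i ≡ 1 mod 4, pᵢ = c_{(i+1)/4}
if i ≡ 3 mod 4, pᵢ = b_{i/2} if i is even. -/
def interleave (A B C : List ℤ) (m : ℕ) : List ℤ :=
  (List.range (4*m - 1)).map (fun k =>
    if (k+1) % 4 = 1 then A.getD ((k+4)/4 - 1) 0
    else if (k+1) % 4 = 3 then C.getD ((k+2)/4 - 1) 0
    else B.getD ((k+1)/2 - 1) 0)

theorem List.getD_mem_of_lt {α : Type*} {l : List α} {n : ℕ} (d : α) (h : n < l.length) :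
    l.getD n d ∈ l := by
  rw [List.getD_eq_getElem _ _ h]
  exact List.getElem_mem h

def SquareAt (p : List ℤ) (s L : ℕ) : Prop :=
  2 ≤ L ∧ s + 2 * L ≤ p.length ∧
    ∀ i < L, ∀ j < L, (p.getD (s + i) 0 < p.getD (s + j) 0 ↔
      p.getD (s + L + i) 0 < p.getD (s + L + j) 0)

theorem containsSquare_iff_exists_squareAt {p : List ℤ} :
    ContainsSquare p ↔ ∃ s L, SquareAt p s L := by
  constructor
  · rintro ⟨_, hinf, a, b, rfl, ha, hlen, hab⟩
    obtain ⟨s, hs, hget⟩ := List.infix_iff_getElem?.mp hinf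
    have hp : ∀ i < a.length + b.length, p.getD (s + i) 0 = (a ++ b).getD i 0 := by
      intro i hi
      rw [List.getD_eq_getElem?_getD, List.getD_eq_getElem?_getD, Nat.add_comm,
        hget i (by simpa using hi), List.getElem?_eq_getElem]
    refine ⟨s, a.length, ha, by simp only [List.length_append, ← hlen] at hs; omega, fun i hi j hj => ?_⟩
    rw [hp i (by omega), hp j (by omega), Nat.add_assoc, Nat.add_assoc, hp _ (by omega),
      hp _ (by omega), List.getD_append _ _ _ _ hi, List.getD_append _ _ _ _ hj,
      List.getD_append_right _ _ _ _ (by omega), List.getD_append_right _ _ _ _ (by omega),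
      Nat.add_sub_cancel_left, Nat.add_sub_cancel_left]
    exact hab i j hi hj
  · rintro ⟨s, L, hL, hsL, hiso⟩
    refine ⟨(p.drop s).take (2 * L), (List.take_prefix _ _).isInfix.trans
      (List.drop_suffix _ _).isInfix, (p.drop s).take (2 * L) |>.take L,
      (p.drop s).take (2 * L) |>.drop L, (List.take_append_drop _ _).symm, ?_, ?_, ?_⟩
    · simp only [List.length_take, List.length_drop]; omega
    · simp only [List.length_take, List.length_drop]; omega
    · intro i j hi hj
      simp only [List.length_take, List.length_drop] at hi hj
      have := hiso i (by omega) j (by omega)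
      simp only [List.getD_eq_getElem?_getD, List.getElem?_take, List.getElem?_drop] at this ⊢
      simpa [show i < L by omega, show j < L by omega, show i < 2 * L by omega,
        show j < 2 * L by omega, show L + i < 2 * L by omega, show L + j < 2 * L by omega,
        Nat.add_assoc] using this

theorem SquareAt.not_lt_of_lt {p : List ℤ} {s L : ℕ} (h : SquareAt p s L) (f : ℕ → ℕ)
    (hf : ∀ i j, i < p.length → j < p.length → f i < f j → p.getD i 0 < p.getD j 0)
    {k k' : ℕ} (hk : k < L) (hk' : k' < L) (hlt : f (s + k) < f (s + k')) :
    ¬ f (s + L + k') < f (s + L + k) := by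
  obtain ⟨-, hsL, hiso⟩ := h
  exact fun hrev => lt_asymm ((hiso k hk k' hk').mp (hf _ _ (by omega) (by omega) hlt))
    (hf _ _ (by omega) (by omega) hrev)

theorem SquareAt.of_stride_two {p q : List ℤ} {s s' c H : ℕ} (h : SquareAt p s (2 * H))
    (hH : 2 ≤ H) (hs : s ≤ s') (hs' : s' ≤ s + 1) (hc : c + 2 * H ≤ q.length)
    (hq : ∀ i < 2 * H, q.getD (c + i) 0 = p.getD (s' + 2 * i) 0) : SquareAt q c H := by
  refine ⟨hH, by omega, fun i hi j hj => ?_⟩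
  rw [hq i (by omega), hq j (by omega), Nat.add_assoc, hq _ (by omega), Nat.add_assoc,
    hq _ (by omega)]
  convert h.2.2 (s' - s + 2 * i) (by omega) (s' - s + 2 * j) (by omega) using 3 <;> omega

/-- The level of position `j` of `z :: interleave U V W m ++ [t]` (0-based): `0` for `z`,
`1` for letters of `W`, `2` for letters of `V`, `3` for letters of `U`, `4` for `t`. -/
def level (m j : ℕ) : ℕ :=
  if j = 0 then 0 else if j = 4 * m then 4
  else if j % 4 = 1 then 3 else if j % 4 = 3 then 1 else 2

theorem level_spec (m j : ℕ) :
    (j = 0 → level m j = 0) ∧ (j ≠ 0 → j = 4 * m → level m j = 4) ∧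
    (j ≠ 0 → j ≠ 4 * m → (j % 4 = 1 → level m j = 3) ∧ (j % 4 = 3 → level m j = 1) ∧
      (j % 2 = 0 → level m j = 2)) := by
  unfold level; split_ifs <;> omega

theorem bounds_of_level_compatible {m s L : ℕ} (hm : 1 ≤ m) (hL : 2 ≤ L)
    (hsL : s + 2 * L ≤ 4 * m + 1)
    (hcompat : ∀ k < L, ∀ k' < L, level m (s + k) < level m (s + k') →
      ¬ level m (s + L + k') < level m (s + L + k)) :
    L % 4 = 0 ∧ 1 ≤ s ∧ s + 2 * L ≤ 4 * m := by
  have step : ∀ k, k + 1 < L →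
      ((s + k) % 4 = 0 ∨ (s + k) % 4 = 3 ↔ (s + L + k) % 4 = 0 ∨ (s + L + k) % 4 = 3) := by
    intro k hk
    have := hcompat k (by omega) (k + 1) hk
    have := hcompat (k + 1) hk k (by omega)
    have := level_spec m (s + k)
    have := level_spec m (s + (k + 1))
    have := level_spec m (s + L + k)
    have := level_spec m (s + L + (k + 1))
    omega
  have hL4 : L % 4 = 0 := by
    have := step 0 (by omega)
    rcases Nat.lt_or_ge L 3 with hL2 | hL3
    · omega
    · have := step 1 (by omega)
      omega
  refine ⟨hL4, ?_, ?_⟩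
  · by_contra hs
    have := hcompat 0 (by omega) 3 (by omega)
    have := level_spec m (s + 0)
    have := level_spec m (s + 3)
    have := level_spec m (s + L + 0)
    have := level_spec m (s + L + 3)
    omega
  · by_contra hs
    have := hcompat (L - 1) (by omega) 0 (by omega)
    have := level_spec m (s + (L - 1))
    have := level_spec m (s + 0)
    have := level_spec m (s + L + 0)
    have := level_spec m (s + L + (L - 1))
    omega

section Construction

variable {m : ℕ} {A B C : List ℤ}

theorem length_interleave : (interleave A B C m).length = 4 * m - 1 := by
  simp [interleave]

theorem getD_interleave {k : ℕ} (hk : k < 4 * m - 1) :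
    (interleave A B C m).getD k 0 =
      if (k + 1) % 4 = 1 then A.getD ((k + 4) / 4 - 1) 0
      else if (k + 1) % 4 = 3 then C.getD ((k + 2) / 4 - 1) 0
      else B.getD ((k + 1) / 2 - 1) 0 := by
  rw [interleave, List.getD_eq_getElem _ _ (by simpa using hk), List.getElem_map,
    List.getElem_range]

theorem getD_interleave_spec (hA : A.length = m) (hB : B.length = 2 * m - 1)
    (hC : C.length = m) {k : ℕ} (hk : k < 4 * m - 1) :
    (k % 4 = 0 → (interleave A B C m).getD k 0 ∈ A) ∧
    (k % 4 = 2 → (interleave A B C m).getD k 0 ∈ C) ∧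
    (k % 2 = 1 → (interleave A B C m).getD k 0 = B.getD (k / 2) 0 ∧
      (interleave A B C m).getD k 0 ∈ B) := by
  rw [getD_interleave hk]
  refine ⟨fun hk4 => ?_, fun hk4 => ?_, fun hk2 => ?_⟩
  · rw [if_pos (by omega)]
    exact List.getD_mem_of_lt _ (by omega)
  · rw [if_neg (by omega), if_pos (by omega)]
    exact List.getD_mem_of_lt _ (by omega)
  · rw [if_neg (by omega), if_neg (by omega), show (k + 1) / 2 - 1 = k / 2 by omega]
    exact ⟨rfl, List.getD_mem_of_lt _ (by omega)⟩

theorem getD_interleave_lt_of_level_lt (hA : A.length = m) (hB : B.length = 2 * m - 1)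
    (hC : C.length = m) (hAB : ∀ a ∈ A, ∀ b ∈ B, b < a) (hBC : ∀ b ∈ B, ∀ c ∈ C, c < b)
    {k k' : ℕ} (hk : k < 4 * m - 1) (hk' : k' < 4 * m - 1)
    (hlt : level m (k + 1) < level m (k' + 1)) :
    (interleave A B C m).getD k 0 < (interleave A B C m).getD k' 0 := by
  have hcases : (k % 4 = 2 ∧ k' % 2 = 1) ∨ (k % 4 = 2 ∧ k' % 4 = 0) ∨
      (k % 2 = 1 ∧ k' % 4 = 0) := by
    have := level_spec m (k + 1)
    have := level_spec m (k' + 1)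
    omega
  obtain ⟨-, hC₁, hB₁⟩ := getD_interleave_spec hA hB hC hk
  obtain ⟨hA₂, -, hB₂⟩ := getD_interleave_spec hA hB hC hk'
  rcases hcases with ⟨h₁, h₂⟩ | ⟨h₁, h₂⟩ | ⟨h₁, h₂⟩
  · exact hBC _ (hB₂ h₂).2 _ (hC₁ h₁)
  · have hb := B.getD_mem_of_lt 0 (show 0 < B.length by omega)
    exact (hBC _ hb _ (hC₁ h₁)).trans (hAB _ (hA₂ h₂) _ hb)
  · exact hAB _ (hA₂ h₂) _ (hB₁ h₁).2

variable {z t : ℤ}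

theorem getD_cons_interleave_succ {k : ℕ} (hk : k < 4 * m - 1) :
    (z :: interleave A B C m ++ [t]).getD (k + 1) 0 = (interleave A B C m).getD k 0 := by
  rw [List.cons_append, List.getD_cons_succ,
    List.getD_append _ _ _ _ (by rw [length_interleave]; exact hk)]

theorem getD_cons_interleave_four_mul (hm : 1 ≤ m) :
    (z :: interleave A B C m ++ [t]).getD (4 * m) 0 = t := by
  obtain ⟨k, hk⟩ : ∃ k, 4 * m = k + 1 := ⟨4 * m - 1, by omega⟩
  rw [hk, List.cons_append, List.getD_cons_succ,
    List.getD_append_right _ _ _ _ (by rw [length_interleave]; omega),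
    show k - (interleave A B C m).length = 0 by rw [length_interleave]; omega]
  rfl

theorem getD_cons_interleave_lt_of_level_lt (hm : 1 ≤ m) (hA : A.length = m)
    (hB : B.length = 2 * m - 1) (hC : C.length = m) (hAB : ∀ a ∈ A, ∀ b ∈ B, b < a)
    (hBC : ∀ b ∈ B, ∀ c ∈ C, c < b) (hzt : ∀ b ∈ interleave A B C m, z < b ∧ b < t)
    {i j : ℕ} (hi : i ≤ 4 * m) (hj : j ≤ 4 * m) (hlt : level m i < level m j) :
    (z :: interleave A B C m ++ [t]).getD i 0 < (z :: interleave A B C m ++ [t]).getD j 0 := by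
  have hbetween : ∀ k < 4 * m - 1, z < (interleave A B C m).getD k 0 ∧
      (interleave A B C m).getD k 0 < t := fun k hk =>
    hzt _ (List.getD_mem_of_lt _ (by rw [length_interleave]; exact hk))
  have := level_spec m i
  have := level_spec m j
  rcases i with _ | k
  · rcases Nat.lt_or_ge j (4 * m) with hj' | hj'
    · obtain ⟨k', rfl⟩ : ∃ k', j = k' + 1 := ⟨j - 1, by omega⟩
      rw [getD_cons_interleave_succ (by omega)]
      exact (hbetween k' (by omega)).1
    · obtain rfl : j = 4 * m := by omega
      rw [getD_cons_interleave_four_mul hm]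
      exact (hbetween 0 (by omega)).1.trans (hbetween 0 (by omega)).2
  · obtain ⟨k', rfl⟩ : ∃ k', j = k' + 1 := ⟨j - 1, by omega⟩
    rw [getD_cons_interleave_succ (by omega)]
    rcases Nat.lt_or_ge k' (4 * m - 1) with hk' | hk'
    · rw [getD_cons_interleave_succ (by omega)]
      exact getD_interleave_lt_of_level_lt hA hB hC hAB hBC (by omega) hk' hlt
    · rw [show k' + 1 = 4 * m by omega, getD_cons_interleave_four_mul hm]
      exact (hbetween k (by omega)).2

theorem getD_cons_interleave_even {i : ℕ} (hA : A.length = m) (hB : B.length = 2 * m - 1)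
    (hC : C.length = m) (hi : i < 2 * m - 1) :
    (z :: interleave A B C m ++ [t]).getD (2 * i + 2) 0 = B.getD i 0 := by
  rw [getD_cons_interleave_succ (by omega)]
  have := ((getD_interleave_spec hA hB hC (k := 2 * i + 1) (by omega)).2.2 (by omega)).1
  rwa [show (2 * i + 1) / 2 = i by omega] at this

end Construction

theorem stmt7_general (m : ℕ) (hm : 1 ≤ m) (U V W : List ℤ)
    (hU : U.length = m) (hV : V.length = 2*m - 1) (hW : W.length = m)
    (hUV : ∀ u ∈ U, ∀ v ∈ V, v < u) (hVW : ∀ v ∈ V, ∀ w ∈ W, w < v)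
    (hVsf : SquareFreeL V)
    (z t : ℤ) (hzt : ∀ b ∈ interleave U V W m, z < b ∧ b < t) :
    SquareFreeL (z :: interleave U V W m ++ [t]) := by
  intro hsq
  obtain ⟨s, L, hsq⟩ := containsSquare_iff_exists_squareAt.mp hsq
  have hlen : (z :: interleave U V W m ++ [t]).length = 4 * m + 1 := by
    simp only [List.cons_append, List.length_cons, List.length_append, length_interleave,
      List.length_nil]
    omega
  have hL := hsq.1
  have hroom := hsq.2.1
  obtain ⟨hL4, hs, hsL⟩ := bounds_of_level_compatible hm hL (by omega)
    fun k hk k' hk' => hsq.not_lt_of_lt (level m)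
      (fun i j hi hj => getD_cons_interleave_lt_of_level_lt hm hU hV hW hUV hVW hzt
        (by omega) (by omega)) hk hk'
  obtain ⟨H, rfl⟩ : ∃ H, L = 2 * H := ⟨L / 2, by omega⟩
  refine hVsf (containsSquare_iff_exists_squareAt.mpr ⟨(s + 1) / 2 - 1, H,
    hsq.of_stride_two (s' := 2 * ((s + 1) / 2)) (by omega) (by omega) (by omega)
      (by rw [hV]; omega) fun i hi => ?_⟩)
  rw [show 2 * ((s + 1) / 2) + 2 * i = 2 * ((s + 1) / 2 - 1 + i) + 2 by omega,
    getD_cons_interleave_even hU hV hW (by omega)]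

theorem stmt7 (m : ℕ) (hm : 1 ≤ m) (U V W : List ℤ)
    (hU : U.length = m) (hV : V.length = 2*m - 1) (hW : W.length = m)
    (hUn : U.Nodup) (hVn : V.Nodup) (hWn : W.Nodup)
    (hUV : ∀ u ∈ U, ∀ v ∈ V, v < u) (hVW : ∀ v ∈ V, ∀ w ∈ W, w < v)
    (hVsf : SquareFreeL V)
    (z t : ℤ) (hzt : ∀ b ∈ interleave U V W m, z < b ∧ b < t) :
    SquareFreeL (z :: interleave U V W m ++ [t]) :=
  stmt7_general m hm U V W hU hV hW hUV hVW hVsf z t hzt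
end

section
/- For every even m = 2k ≥ 2, any permutation P = p₁…p_{4k-1} constructed by Construction 2 satisfies p₂ > p₃ and p_{4k-3} > p_{4k-2}; hence it is a square-free permutation of odd length 4k-1 with second symbol greater than third and (4k-3)-th symbol greater than (4k-2)-th. -/
/-!
With `U > V > W` the construction reads `u v w v u v w v …`, so (0-based) it descends exactly at
the positions `≡ 0, 1 (mod 4)`. The halves of a square are order-isomorphic, so they have the same
descents; comparing the first two steps of each half forces the half-length to be a multiple of
`4`. The entries of `V` sit at the odd positions, so the two halves then restrict to a square
of `V`.
-/

lemma getD_take_drop {p : List ℤ} {s ℓ i : ℕ} (hi : i < ℓ) :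
    ((p.drop s).take ℓ).getD i 0 = p.getD (s + i) 0 := by
  simp [List.getD_eq_getElem?_getD, hi]

lemma getD_append_append_left {pre a suf : List ℤ} {i : ℕ} (hi : i < a.length) :
    (pre ++ (a ++ suf)).getD (pre.length + i) 0 = a.getD i 0 := by
  rw [List.getD_append_right _ _ _ _ (Nat.le_add_right _ _), Nat.add_sub_cancel_left,
    List.getD_append _ _ _ _ hi]

lemma getD_mem {l : List ℤ} {i : ℕ} (h : i < l.length) : l.getD i 0 ∈ l := by
  rw [List.getD_eq_getElem _ _ h]
  exact List.getElem_mem h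

def HasSquareAt (p : List ℤ) (s ℓ : ℕ) : Prop :=
  2 ≤ ℓ ∧ s + 2 * ℓ ≤ p.length ∧ ∀ i < ℓ, ∀ j < ℓ,
    (p.getD (s + i) 0 < p.getD (s + j) 0 ↔ p.getD (s + ℓ + i) 0 < p.getD (s + ℓ + j) 0)

theorem containsSquare_iff_exists_hasSquareAt {p : List ℤ} :
    ContainsSquare p ↔ ∃ s ℓ, HasSquareAt p s ℓ := by
  constructor
  · rintro ⟨_, ⟨pre, suf, rfl⟩, a, b, rfl, ha, hlen, hiso⟩
    have hA : ∀ i < a.length, (pre ++ (a ++ b) ++ suf).getD (pre.length + i) 0 = a.getD i 0 := by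
      intro i hi
      rw [List.append_assoc, List.append_assoc]
      exact getD_append_append_left hi
    have hB : ∀ i < a.length,
        (pre ++ (a ++ b) ++ suf).getD (pre.length + a.length + i) 0 = b.getD i 0 := by
      intro i hi
      simp only [List.append_assoc]
      rw [← List.length_append, ← List.append_assoc pre a]
      exact getD_append_append_left (hlen ▸ hi)
    refine ⟨pre.length, a.length, ha,
      by simp only [List.append_assoc, List.length_append]; omega, fun i hi j hj => ?_⟩
    rw [hA i hi, hA j hj, hB i hi, hB j hj]
    exact hiso i j hi hj
  · rintro ⟨s, ℓ, hℓ, hlen, hsq⟩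
    refine ⟨(p.drop s).take (2 * ℓ),
      (List.take_prefix _ _).isInfix.trans (List.drop_suffix _ _).isInfix,
      (p.drop s).take ℓ, (p.drop (s + ℓ)).take ℓ, by rw [two_mul, List.take_add, List.drop_drop],
      by simp only [List.length_take, List.length_drop]; omega,
      by simp only [List.length_take, List.length_drop]; omega, fun i j hi hj => ?_⟩
    simp only [List.length_take, List.length_drop, lt_min_iff] at hi hj
    rw [getD_take_drop hi.1, getD_take_drop hj.1, getD_take_drop hi.1, getD_take_drop hj.1]
    exact hsq i hi.1 j hj.1

namespace HasSquareAt

variable {p : List ℤ} {s ℓ : ℕ}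

theorem four_dvd_of_descents (h : HasSquareAt p s ℓ)
    (hdesc : ∀ i, i + 1 < p.length → (p.getD (i + 1) 0 < p.getD i 0 ↔ i % 4 < 2)) : 4 ∣ ℓ := by
  obtain ⟨hℓ, hlen, hsq⟩ := h
  have step : ∀ i, i + 1 < ℓ → ((s + i) % 4 < 2 ↔ (s + ℓ + i) % 4 < 2) := fun i hi => by
    rw [← hdesc _ (by omega), ← hdesc _ (by omega)]
    exact hsq (i + 1) hi i (by omega)
  have h0 := step 0 (by omega)
  rcases hℓ.eq_or_lt with rfl | hℓ
  · omega
  · have h1 := step 1 (by omega)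
    omega

theorem of_odd_positions {q : List ℤ} {m : ℕ} (h : HasSquareAt p s (2 * m)) (hm : 2 ≤ m)
    (hlen : p.length ≤ 2 * q.length + 1)
    (hq : ∀ n < q.length, q.getD n 0 = p.getD (2 * n + 1) 0) : HasSquareAt q (s / 2) m := by
  obtain ⟨-, hsp, hsq⟩ := h
  refine ⟨hm, by omega, fun i hi j hj => ?_⟩
  rw [hq _ (by omega), hq _ (by omega), hq _ (by omega), hq _ (by omega)]
  have := hsq (2 * (s / 2 + i) + 1 - s) (by omega) (2 * (s / 2 + j) + 1 - s) (by omega)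
  rwa [show s + (2 * (s / 2 + i) + 1 - s) = 2 * (s / 2 + i) + 1 by omega,
    show s + (2 * (s / 2 + j) + 1 - s) = 2 * (s / 2 + j) + 1 by omega,
    show s + 2 * m + (2 * (s / 2 + i) + 1 - s) = 2 * (s / 2 + m + i) + 1 by omega,
    show s + 2 * m + (2 * (s / 2 + j) + 1 - s) = 2 * (s / 2 + m + j) + 1 by omega] at this

end HasSquareAt

theorem interleave_length (A B C : List ℤ) (m : ℕ) :
    (interleave A B C m).length = 4 * m - 1 := by
  simp [interleave]

theorem interleave_getD {A B C : List ℤ} {m i : ℕ} (hi : i < 4 * m - 1) :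
    (interleave A B C m).getD i 0 =
      if i % 4 = 0 then A.getD (i / 4) 0
      else if i % 4 = 2 then C.getD (i / 4) 0
      else B.getD (i / 2) 0 := by
  simp only [interleave, List.getD_eq_getElem?_getD, List.getElem?_map, List.getElem?_range hi,
    Option.map_some, Option.getD_some]
  split_ifs <;> first | omega | (congr 2; omega)

theorem interleave_getD_odd (A B C : List ℤ) {m n : ℕ} (hn : 2 * n + 1 < 4 * m - 1) :
    (interleave A B C m).getD (2 * n + 1) 0 = B.getD n 0 := by
  rw [interleave_getD hn, if_neg (by omega), if_neg (by omega)]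
  congr 1
  omega

theorem interleave_getD_succ_lt_iff {U V W : List ℤ} {k i : ℕ}
    (hU : U.length = k) (hV : V.length = 2 * k - 1) (hW : W.length = k)
    (hUV : ∀ u ∈ U, ∀ v ∈ V, v < u) (hVW : ∀ v ∈ V, ∀ w ∈ W, w < v) (hi : i + 1 < 4 * k - 1) :
    (interleave U V W k).getD (i + 1) 0 < (interleave U V W k).getD i 0 ↔ i % 4 < 2 := by
  rw [interleave_getD hi, interleave_getD (show i < 4 * k - 1 by omega)]
  have hv : i % 2 = 1 → V.getD (i / 2) 0 ∈ V := fun _ => getD_mem (by omega)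
  have hv' : i % 2 = 0 → V.getD ((i + 1) / 2) 0 ∈ V := fun _ => getD_mem (by omega)
  have hw : W.getD (i / 4) 0 ∈ W := getD_mem (by omega)
  rcases (by omega : i % 4 = 0 ∨ i % 4 = 1 ∨ i % 4 = 2 ∨ i % 4 = 3) with h | h | h | h
  · simp only [h, show (i + 1) % 4 = 1 by omega]
    simpa using hUV _ (getD_mem (by omega)) _ (hv' (by omega))
  · simp only [h, show (i + 1) % 4 = 2 by omega, show (i + 1) / 4 = i / 4 by omega]
    simpa using hVW _ (hv (by omega)) _ hw
  · simp only [h, show (i + 1) % 4 = 3 by omega]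
    simpa using (hVW _ (hv' (by omega)) _ hw).le
  · simp only [h, show (i + 1) % 4 = 0 by omega]
    simpa using (hUV _ (getD_mem (by omega)) _ (hv (by omega))).le

theorem stmt17_general (k : ℕ) (hk : 1 ≤ k) (U V W : List ℤ)
    (hU : U.length = k) (hV : V.length = 2*k - 1) (hW : W.length = k)
    (hUV : ∀ u ∈ U, ∀ v ∈ V, v < u) (hVW : ∀ v ∈ V, ∀ w ∈ W, w < v)
    (hVsf : SquareFreeL V) :
    SquareFreeL (interleave U V W k) ∧
    (interleave U V W k).length = 4*k - 1 ∧
    Odd (interleave U V W k).length ∧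
    (interleave U V W k).getD 1 0 > (interleave U V W k).getD 2 0 ∧
    (interleave U V W k).getD (4*k - 4) 0 > (interleave U V W k).getD (4*k - 3) 0 := by
  have hlen := interleave_length U V W k
  have hdesc : ∀ i, i + 1 < (interleave U V W k).length →
      ((interleave U V W k).getD (i + 1) 0 < (interleave U V W k).getD i 0 ↔ i % 4 < 2) :=
    fun i hi => interleave_getD_succ_lt_iff hU hV hW hUV hVW (hlen ▸ hi)
  refine ⟨fun hsq => ?_, hlen, by rw [hlen, Nat.odd_iff]; omega,
    (hdesc 1 (by omega)).2 (by norm_num), ?_⟩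
  · obtain ⟨s, ℓ, hsq⟩ := containsSquare_iff_exists_hasSquareAt.1 hsq
    obtain ⟨m, rfl⟩ := hsq.four_dvd_of_descents hdesc
    rw [show 4 * m = 2 * (2 * m) by ring] at hsq
    exact hVsf <| containsSquare_iff_exists_hasSquareAt.2 ⟨s / 2, 2 * m,
      hsq.of_odd_positions (by have := hsq.1; omega) (by omega)
        fun n hn => (interleave_getD_odd U V W (by omega)).symm⟩
  · have := (hdesc (4 * k - 4) (by omega)).2 (by omega)
    rwa [show 4 * k - 4 + 1 = 4 * k - 3 by omega] at this

theorem stmt17 (k : ℕ) (hk : 1 ≤ k) (U V W : List ℤ)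
    (hU : U.length = k) (hV : V.length = 2*k - 1) (hW : W.length = k)
    (hUn : U.Nodup) (hVn : V.Nodup) (hWn : W.Nodup)
    (hUV : ∀ u ∈ U, ∀ v ∈ V, v < u) (hVW : ∀ v ∈ V, ∀ w ∈ W, w < v)
    (hVsf : SquareFreeL V) :
    SquareFreeL (interleave U V W k) ∧
    (interleave U V W k).length = 4*k - 1 ∧
    Odd (interleave U V W k).length ∧
    (interleave U V W k).getD 1 0 > (interleave U V W k).getD 2 0 ∧
    (interleave U V W k).getD (4*k - 4) 0 > (interleave U V W k).getD (4*k - 3) 0 :=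
  stmt17_general k hk U V W hU hV hW hUV hVW hVsf
end
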